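/- Let X, Y, P be real Banach spaces, F : X × P ⇒ Y and G : X ⇒ Y multifunctions and (x̄,p̄,ȳ) ∈ X × P × Y with ȳ ∈ F(x̄,p̄) and −ȳ ∈ G(x̄). Let S : P ⇒ X be defined by S(p) = {x ∈ X : 0 ∈ F(x,p) + G(x)}. Assume: (i) (F,G) is locally sum-stable around (x̄,p̄,ȳ,−ȳ); (ii) F, as a multifunction of (x,p), is inner semicontinuous at ((x̄,p̄),ȳ); (iii) F is Lipschitz-like with respect to x uniformly in p around ((x̄,p̄),ȳ) with constant l > 0; (iv) F is metrically regular with respect to p uniformly in x around ((x̄,p̄),ȳ) with constant k > 0; (v) G is Lipschitz-like around (x̄,−ȳ) with constant m > 0. Then S is metrically regular around (p̄,x̄); more precisely, for every κ > k·(l + m), S is metrically regular around (p̄,x̄) with constant κ. -/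

import Mathlib

open Metric Set Filter Topology Pointwise

/-- The pair `(F, G)` is locally sum-stable around `(xb, pb, yb, zb)`. -/
def LocSumStableP {X P Y : Type*} [NormedAddCommGroup X] [NormedAddCommGroup P]
    [NormedAddCommGroup Y] (F : X × P → Set Y) (G : X → Set Y)
    (xb : X) (pb : P) (yb zb : Y) : Prop :=
  ∀ ε > (0 : ℝ), ∃ δ > (0 : ℝ), ∀ x ∈ ball xb δ, ∀ p ∈ ball pb δ,
    ∀ w ∈ (F (x, p) + G x) ∩ ball (yb + zb) δ,
      ∃ y ∈ F (x, p) ∩ ball yb ε, ∃ z ∈ G x ∩ ball zb ε, w = y + z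

/-- Inner semicontinuity of a multifunction `H : α ⇒ Y` at `(a, y)`. -/
def InnerSemicontinuousAt {α Y : Type*} [TopologicalSpace α] [TopologicalSpace Y]
    (H : α → Set Y) (a : α) (y : Y) : Prop :=
  ∀ D : Set Y, IsOpen D → y ∈ D → ∃ U ∈ 𝓝 a, ∀ b ∈ U, (H b ∩ D).Nonempty

/-- `F : X × P ⇒ Y` is Lipschitz-like with respect to `x` uniformly in `p`
around `((xb, pb), yb)` with constant `l`. -/
def LipschitzLikeWrtXUnifP {X P Y : Type*} [NormedAddCommGroup X]
    [NormedAddCommGroup P] [NormedAddCommGroup Y] (F : X × P → Set Y)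
    (xb : X) (pb : P) (yb : Y) (l : ℝ) : Prop :=
  ∃ U ∈ 𝓝 xb, ∃ V ∈ 𝓝 pb, ∃ W ∈ 𝓝 yb, ∀ p ∈ V, ∀ x ∈ U, ∀ u ∈ U,
    F (x, p) ∩ W ⊆ F (u, p) + closedBall (0 : Y) (l * ‖x - u‖)

/-- `F : X × P ⇒ Y` is metrically regular with respect to `p` uniformly in `x`
around `((xb, pb), yb)` with constant `k`. -/
def MetRegWrtPUnifX {X P Y : Type*} [NormedAddCommGroup X] [NormedAddCommGroup P]
    [NormedAddCommGroup Y] (F : X × P → Set Y)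
    (xb : X) (pb : P) (yb : Y) (k : ℝ) : Prop :=
  ∃ U ∈ 𝓝 xb, ∃ V ∈ 𝓝 pb, ∃ W ∈ 𝓝 yb, ∀ x ∈ U, ∀ p ∈ V, ∀ y ∈ W,
    EMetric.infEdist p {q : P | y ∈ F (x, q)} ≤
      ENNReal.ofReal k * EMetric.infEdist y (F (x, p))

/-- `G : X ⇒ Y` is Lipschitz-like around `(xb, zb)` with constant `m`. -/
def LipschitzLikeAround {X Y : Type*} [NormedAddCommGroup X] [NormedAddCommGroup Y]
    (G : X → Set Y) (xb : X) (zb : Y) (m : ℝ) : Prop :=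
  ∃ U ∈ 𝓝 xb, ∃ V ∈ 𝓝 zb, ∀ x ∈ U, ∀ u ∈ U,
    G x ∩ V ⊆ G u + closedBall (0 : Y) (m * ‖x - u‖)

/-- `S : P ⇒ X` is metrically regular around `(pb, xb)` with constant `κ`. -/
def MetricallyRegularAround {P X : Type*} [NormedAddCommGroup P]
    [NormedAddCommGroup X] (S : P → Set X) (pb : P) (xb : X) (κ : ℝ) : Prop :=
  ∃ V ∈ 𝓝 pb, ∃ U ∈ 𝓝 xb, ∀ p ∈ V, ∀ x ∈ U,
    EMetric.infEdist p {q | x ∈ S q} ≤ ENNReal.ofReal κ * EMetric.infEdist x (S p)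

open scoped ENNReal

/-! The solution set of `-z ∈ F(x, ·)` with `z ∈ G x` lies in `S⁻¹(x)`, so metric regularity of
`F` in `p` gives `d(p, S⁻¹(x)) ≤ k‖y + z‖` for all `y ∈ F(x,p)`, `z ∈ G x`. If `x` is at distance
at least `r` from `S(p)`, take `z ∈ G x` within `m‖x - xb‖` of `-yb` and, by inner semicontinuity,
`y ∈ F(x,p)` so close to `yb` that `k (m r + ‖y - yb‖) ≤ κ r`. If `u ∈ S(p)` is close to `x`,
sum-stability splits `0 = y + z` with `y ∈ F(u,p)`, `z ∈ G u` near `yb`, `-yb`; moving both to `x`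
by the Lipschitz-like properties costs `(l + m)‖u - x‖`, and `k (l + m) < κ`. -/

theorem eventually_mul_lt (c : ℝ) {d : ℝ} (hd : 0 < d) : ∀ᶠ r in 𝓝 (0 : ℝ), c * r < d :=
  (continuous_const.mul continuous_id).continuousAt.eventually_lt continuousAt_const
    (by simpa using hd)

theorem le_mul_infEDist_of_forall_lt {α : Type*} [PseudoEMetricSpace α] {x : α} {s : Set α}
    {a c R : ℝ≥0∞} (hc : c ≠ ⊤) (hR : infEDist x s < R)
    (h : ∀ u ∈ s, edist x u < R → a ≤ c * edist x u) : a ≤ c * infEDist x s := by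
  refine ENNReal.le_of_forall_pos_le_add fun ε hε _ => ?_
  have hη : (ε : ℝ≥0∞) / c ≠ 0 := (ENNReal.div_pos_iff.2 ⟨by simpa using hε.ne', hc⟩).ne'
  obtain ⟨u, hu, hxu⟩ :=
    infEDist_lt_iff.1 (lt_min hR (ENNReal.lt_add_right (ne_top_of_lt hR) hη))
  calc a ≤ c * edist x u := h u hu (hxu.trans_le (min_le_left _ _))
    _ ≤ c * (infEDist x s + ε / c) := by gcongr; exact (hxu.trans_le (min_le_right _ _)).le
    _ ≤ c * infEDist x s + ε := by rw [mul_add]; gcongr; exact ENNReal.mul_div_le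

section

variable {X P Y : Type*} [NormedAddCommGroup X] [NormedAddCommGroup P] [NormedAddCommGroup Y]

def solutionMap (F : X × P → Set Y) (G : X → Set Y) (p : P) : Set X :=
  {x | (0 : Y) ∈ F (x, p) + G x}

/-- Hypotheses (iii)–(v) on balls of a common radius `ρ` around `xb`, `pb`, `yb` and `-yb`. -/
structure EstimatesOnBalls (F : X × P → Set Y) (G : X → Set Y) (xb : X) (pb : P) (yb : Y)
    (k l m ρ : ℝ) : Prop where
  lipschitz_F : ∀ p ∈ ball pb ρ, ∀ x ∈ ball xb ρ, ∀ u ∈ ball xb ρ,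
    F (x, p) ∩ ball yb ρ ⊆ F (u, p) + closedBall (0 : Y) (l * ‖x - u‖)
  metricRegular_F : ∀ x ∈ ball xb ρ, ∀ p ∈ ball pb ρ, ∀ y ∈ ball yb ρ,
    infEDist p {q | y ∈ F (x, q)} ≤ ENNReal.ofReal k * infEDist y (F (x, p))
  lipschitz_G : ∀ x ∈ ball xb ρ, ∀ u ∈ ball xb ρ,
    G x ∩ ball (-yb) ρ ⊆ G u + closedBall (0 : Y) (m * ‖x - u‖)

variable {F : X × P → Set Y} {G : X → Set Y} {xb : X} {pb : P} {yb : Y} {k l m ρ : ℝ}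

theorem eventually_estimatesOnBalls (hFl : LipschitzLikeWrtXUnifP F xb pb yb l)
    (hFr : MetRegWrtPUnifX F xb pb yb k) (hG : LipschitzLikeAround G xb (-yb) m) :
    ∀ᶠ ρ in 𝓝 0, EstimatesOnBalls F G xb pb yb k l m ρ := by
  obtain ⟨U₁, hU₁, V₁, hV₁, W₁, hW₁, hFl⟩ := hFl
  obtain ⟨U₂, hU₂, V₂, hV₂, W₂, hW₂, hFr⟩ := hFr
  obtain ⟨U₃, hU₃, W₃, hW₃, hG⟩ := hG
  filter_upwards [eventually_ball_subset hU₁, eventually_ball_subset hV₁,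
    eventually_ball_subset hW₁, eventually_ball_subset hU₂, eventually_ball_subset hV₂,
    eventually_ball_subset hW₂, eventually_ball_subset hU₃, eventually_ball_subset hW₃]
    with ρ hU₁ hV₁ hW₁ hU₂ hV₂ hW₂ hU₃ hW₃
  exact ⟨fun p hp x hx u hu => (inter_subset_inter_right _ hW₁).trans
      (hFl p (hV₁ hp) x (hU₁ hx) u (hU₁ hu)),
    fun x hx p hp y hy => hFr x (hU₂ hx) p (hV₂ hp) y (hW₂ hy),
    fun x hx u hu => (inter_subset_inter_right _ hW₃).trans (hG x (hU₃ hx) u (hU₃ hu))⟩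

namespace EstimatesOnBalls

variable {x u : X} {p : P} {y z : Y} {κ δ r : ℝ}

theorem infEDist_solutionMap_le_of_mem (hE : EstimatesOnBalls F G xb pb yb k l m ρ) (hk : 0 ≤ k)
    (hx : x ∈ ball xb ρ) (hp : p ∈ ball pb ρ) (hz : z ∈ G x) (hzb : -z ∈ ball yb ρ)
    (hy : y ∈ F (x, p)) :
    infEDist p {q | x ∈ solutionMap F G q} ≤ ENNReal.ofReal (k * ‖y + z‖) :=
  calc infEDist p {q | x ∈ solutionMap F G q}
      ≤ infEDist p {q | -z ∈ F (x, q)} :=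
        infEDist_anti fun q hq => ⟨-z, hq, z, hz, neg_add_cancel z⟩
    _ ≤ ENNReal.ofReal k * infEDist (-z) (F (x, p)) := hE.metricRegular_F x hx p hp _ hzb
    _ ≤ ENNReal.ofReal k * ENNReal.ofReal ‖y + z‖ := by
        gcongr
        refine (infEDist_le_edist_of_mem hy).trans_eq ?_
        rw [edist_dist, dist_eq_norm, ← norm_neg]
        congr 2
        abel
    _ = ENNReal.ofReal (k * ‖y + z‖) := (ENNReal.ofReal_mul hk).symm

theorem infEDist_solutionMap_le_of_far (hE : EstimatesOnBalls F G xb pb yb k l m ρ) (hk : 0 ≤ k)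
    (hybG : -yb ∈ G xb) (hx : x ∈ ball xb ρ) (hp : p ∈ ball pb ρ) (hmx : m * ‖x - xb‖ < ρ)
    (hy : y ∈ F (x, p)) :
    infEDist p {q | x ∈ solutionMap F G q} ≤ ENNReal.ofReal (k * (m * ‖x - xb‖ + ‖y - yb‖)) := by
  have hρ := pos_of_mem_ball hx
  obtain ⟨z, hz, c, hc, hzc⟩ :=
    hE.lipschitz_G xb (mem_ball_self hρ) x hx ⟨hybG, mem_ball_self hρ⟩
  rw [mem_closedBall_zero_iff, norm_sub_rev] at hc
  have hz_eq : -z = yb + c := by rw [eq_sub_of_add_eq hzc]; abel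
  refine (hE.infEDist_solutionMap_le_of_mem hk hx hp hz ?_ hy).trans
    (ENNReal.ofReal_le_ofReal ?_)
  · rw [mem_ball, dist_eq_norm, hz_eq, add_sub_cancel_left]
    exact hc.trans_lt hmx
  · gcongr
    calc ‖y + z‖ = ‖(y - yb) - c‖ := by rw [← neg_neg z, hz_eq]; congr 1; abel
      _ ≤ ‖y - yb‖ + ‖c‖ := norm_sub_le _ _
      _ ≤ m * ‖x - xb‖ + ‖y - yb‖ := by linarith

theorem infEDist_solutionMap_le_of_near (hE : EstimatesOnBalls F G xb pb yb k l m ρ) (hk : 0 ≤ k)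
    (hx : x ∈ ball xb ρ) (hp : p ∈ ball pb ρ) (hu : u ∈ ball xb ρ) (hmu : m * ‖u - x‖ < ρ / 2)
    (hy : y ∈ F (u, p) ∩ ball yb (ρ / 2)) (hz : z ∈ G u ∩ ball (-yb) (ρ / 2)) (hyz : 0 = y + z) :
    infEDist p {q | x ∈ solutionMap F G q} ≤ ENNReal.ofReal (k * ((l + m) * ‖u - x‖)) := by
  have hρ := pos_of_mem_ball hx
  obtain ⟨y', hy', b, hb, rfl⟩ :=
    hE.lipschitz_F p hp u hu x hx ⟨hy.1, ball_subset_ball (half_le_self hρ.le) hy.2⟩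
  obtain ⟨z', hz', c, hc, rfl⟩ :=
    hE.lipschitz_G u hu x hx ⟨hz.1, ball_subset_ball (half_le_self hρ.le) hz.2⟩
  rw [mem_closedBall_zero_iff] at hb hc
  beta_reduce at hz hyz
  have hyz' : y' + z' = -(b + c) := eq_neg_of_add_eq_zero_left (by rw [hyz]; abel)
  refine (hE.infEDist_solutionMap_le_of_mem hk hx hp hz' ?_ hy').trans
    (ENNReal.ofReal_le_ofReal ?_)
  · have hzb : ‖z' + c - -yb‖ < ρ / 2 := by rw [← dist_eq_norm]; exact hz.2
    rw [mem_ball, dist_eq_norm]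
    calc ‖-z' - yb‖ = ‖c - (z' + c - -yb)‖ := by congr 1; abel
      _ ≤ ‖c‖ + ‖z' + c - -yb‖ := norm_sub_le _ _
      _ < ρ := by linarith
  · gcongr
    calc ‖y' + z'‖ ≤ ‖b‖ + ‖c‖ := by rw [hyz', norm_neg]; exact norm_add_le _ _
      _ ≤ (l + m) * ‖u - x‖ := by linarith

theorem infEDist_solutionMap_le_mul_infEDist (hE : EstimatesOnBalls F G xb pb yb k l m ρ)
    (hk : 0 ≤ k) (hm : 0 ≤ m) (hκ : k * (l + m) ≤ κ) (hybG : -yb ∈ G xb)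
    (hsum : ∀ x ∈ ball xb δ, ∀ p ∈ ball pb δ, ∀ w ∈ (F (x, p) + G x) ∩ ball (yb + -yb) δ,
      ∃ y ∈ F (x, p) ∩ ball yb (ρ / 2), ∃ z ∈ G x ∩ ball (-yb) (ρ / 2), w = y + z)
    (hrδ : 2 * r < δ) (hrρ : 2 * r < ρ) (hmr : 2 * m * r < ρ)
    (hx : x ∈ ball xb r) (hp : p ∈ ball pb r) (hy : y ∈ F (x, p))
    (hyb : k * (m * r + ‖y - yb‖) ≤ κ * r) :
    infEDist p {q | x ∈ solutionMap F G q} ≤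
      ENNReal.ofReal κ * infEDist x (solutionMap F G p) := by
  have hr := pos_of_mem_ball hx
  have hxρ : x ∈ ball xb ρ := ball_subset_ball (by linarith) hx
  have hpρ : p ∈ ball pb ρ := ball_subset_ball (by linarith) hp
  have hxr : ‖x - xb‖ < r := mem_ball_iff_norm.1 hx
  by_cases hfar : ENNReal.ofReal r ≤ infEDist x (solutionMap F G p)
  · calc infEDist p {q | x ∈ solutionMap F G q}
        ≤ ENNReal.ofReal (k * (m * ‖x - xb‖ + ‖y - yb‖)) :=
          hE.infEDist_solutionMap_le_of_far hk hybG hxρ hpρ (by nlinarith) hy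
      _ ≤ ENNReal.ofReal (κ * r) := ENNReal.ofReal_le_ofReal (le_trans (by gcongr) hyb)
      _ = ENNReal.ofReal κ * ENNReal.ofReal r := ENNReal.ofReal_mul' hr.le
      _ ≤ ENNReal.ofReal κ * infEDist x (solutionMap F G p) := by gcongr
  · refine le_mul_infEDist_of_forall_lt ENNReal.ofReal_ne_top (not_le.1 hfar) fun u hu hxu => ?_
    rw [edist_lt_ofReal, dist_comm, dist_eq_norm] at hxu
    have hur : ‖u - xb‖ < 2 * r := by
      calc ‖u - xb‖ ≤ ‖u - x‖ + ‖x - xb‖ := norm_sub_le_norm_sub_add_norm_sub _ _ _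
        _ < 2 * r := by linarith
    obtain ⟨y, hy, z, hz, hyz⟩ := hsum u (mem_ball_iff_norm.2 (by linarith)) p
      (ball_subset_ball (by linarith) hp) 0 ⟨hu, by simpa using hr.trans (by linarith)⟩
    calc infEDist p {q | x ∈ solutionMap F G q}
        ≤ ENNReal.ofReal (k * ((l + m) * ‖u - x‖)) :=
          hE.infEDist_solutionMap_le_of_near hk hxρ hpρ (mem_ball_iff_norm.2 (by linarith))
            (by nlinarith) hy hz hyz
      _ ≤ ENNReal.ofReal (κ * ‖u - x‖) := ENNReal.ofReal_le_ofReal (by rw [← mul_assoc]; gcongr)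
      _ = ENNReal.ofReal κ * edist x u := by
          rw [ENNReal.ofReal_mul' (norm_nonneg _), edist_dist, dist_comm, dist_eq_norm]

end EstimatesOnBalls

end

theorem stmt13_general {X Y P : Type*}
    [NormedAddCommGroup X] [NormedAddCommGroup Y] [NormedAddCommGroup P]
    (F : X × P → Set Y) (G : X → Set Y) (xb : X) (pb : P) (yb : Y)
    (hybG : -yb ∈ G xb)
    (S : P → Set X) (hS : ∀ p, S p = {x : X | (0 : Y) ∈ F (x, p) + G x})
    (hsum : LocSumStableP F G xb pb yb (-yb))
    (hisc : InnerSemicontinuousAt F (xb, pb) yb)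
    (l : ℝ) (hl : 0 < l) (hFlip : LipschitzLikeWrtXUnifP F xb pb yb l)
    (k : ℝ) (hk : 0 < k) (hFreg : MetRegWrtPUnifX F xb pb yb k)
    (m : ℝ) (hm : 0 < m) (hGlip : LipschitzLikeAround G xb (-yb) m) :
    ∀ κ : ℝ, k * (l + m) < κ → MetricallyRegularAround S pb xb κ := by
  intro κ hκ
  obtain rfl : S = solutionMap F G := funext hS
  obtain ⟨ρ, hρ, hE⟩ := (eventually_estimatesOnBalls hFlip hFreg hGlip).exists_gt
  obtain ⟨δ, hδ, hsumδ⟩ := hsum (ρ / 2) (half_pos hρ)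
  obtain ⟨r, hr, hrδ, hrρ, hmr⟩ := ((eventually_mul_lt 2 hδ).and
    ((eventually_mul_lt 2 hρ).and (eventually_mul_lt (2 * m) hρ))).exists_gt
  have hkm : k * m < κ := by nlinarith [mul_pos hk hl]
  obtain ⟨W, hW, hFW⟩ := hisc (ball yb ((κ - k * m) * r / k)) isOpen_ball
    (mem_ball_self (div_pos (mul_pos (sub_pos.2 hkm) hr) hk))
  obtain ⟨U, hU, V, hV, hUV⟩ := mem_nhds_prod_iff.1 hW
  refine ⟨V ∩ ball pb r, inter_mem hV (ball_mem_nhds _ hr),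
    U ∩ ball xb r, inter_mem hU (ball_mem_nhds _ hr), fun p hp x hx => ?_⟩
  obtain ⟨y, hy, hyb⟩ := hFW (x, p) (hUV ⟨hx.1, hp.1⟩)
  have hkyb : k * ‖y - yb‖ < (κ - k * m) * r := (lt_div_iff₀' hk).1 (mem_ball_iff_norm.1 hyb)
  exact hE.infEDist_solutionMap_le_mul_infEDist hk.le hm.le hκ.le hybG hsumδ hrδ hrρ hmr
    hx.2 hp.2 hy (by linarith)

/-- metric regularity of the solution map of the variational system
`0 ∈ F(x,p) + G(x)`. -/
theorem stmt13 {X Y P : Type*}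
    [NormedAddCommGroup X] [NormedSpace ℝ X] [CompleteSpace X]
    [NormedAddCommGroup Y] [NormedSpace ℝ Y] [CompleteSpace Y]
    [NormedAddCommGroup P] [NormedSpace ℝ P] [CompleteSpace P]
    (F : X × P → Set Y) (G : X → Set Y) (xb : X) (pb : P) (yb : Y)
    (hybF : yb ∈ F (xb, pb)) (hybG : -yb ∈ G xb)
    (S : P → Set X) (hS : ∀ p, S p = {x : X | (0 : Y) ∈ F (x, p) + G x})
    (hsum : LocSumStableP F G xb pb yb (-yb))
    (hisc : InnerSemicontinuousAt F (xb, pb) yb)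
    (l : ℝ) (hl : 0 < l) (hFlip : LipschitzLikeWrtXUnifP F xb pb yb l)
    (k : ℝ) (hk : 0 < k) (hFreg : MetRegWrtPUnifX F xb pb yb k)
    (m : ℝ) (hm : 0 < m) (hGlip : LipschitzLikeAround G xb (-yb) m) :
    ∀ κ : ℝ, k * (l + m) < κ → MetricallyRegularAround S pb xb κ :=
  stmt13_general F G xb pb yb hybG S hS hsum hisc l hl hFlip k hk hFreg m hm hGlip
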